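/- For a 4-dimensional nilpotent complex Leibniz algebra L, the sequence of dimensions (dim L¹, dim L², dim L³, dim L⁴) cannot be (4,3,2,0), (4,3,1,0), or (4,3,0,0); i.e. if dim L¹ = 4 and dim L² = 3 then dim L³ = 2 and dim L⁴ = 1. -/
import Mathlib


/-- The lower central series of a (Leibniz) bracket: `lcs b 0 = L = L¹`,
`lcs b k = L^{k+1} = [L^k, L]`. -/
noncomputable def lcs {L : Type*} [AddCommGroup L] [Module ℂ L]
    (b : L →ₗ[ℂ] L →ₗ[ℂ] L) : ℕ → Submodule ℂ L
  | 0 => ⊤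
  | k + 1 => Submodule.span ℂ {z : L | ∃ x ∈ lcs b k, ∃ y : L, z = b x y}

section Aux

open Module

variable {L : Type*} [AddCommGroup L] [Module ℂ L] (b : L →ₗ[ℂ] L →ₗ[ℂ] L)

lemma lcs_succ_le : ∀ k, lcs b (k + 1) ≤ lcs b k
  | 0 => le_top
  | (k + 1) => by
    apply Submodule.span_mono
    rintro z ⟨x, hx, y, rfl⟩
    exact ⟨x, lcs_succ_le k hx, y, rfl⟩

lemma mem_lcs_succ {k : ℕ} {a : L} (ha : a ∈ lcs b k) (y : L) :
    b a y ∈ lcs b (k + 1) :=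
  Submodule.subset_span ⟨a, ha, y, rfl⟩

lemma bracket_lcs1_mem (hLeib : ∀ x y z : L, b x (b y z) = b (b x y) z - b (b x z) y)
    {k : ℕ} {a : L} (ha : a ∈ lcs b k) {w : L} (hw : w ∈ lcs b 1) :
    b a w ∈ lcs b (k + 2) := by
  have hle : lcs b 1 ≤ (lcs b (k + 2)).comap (b a) := by
    show Submodule.span ℂ {z : L | ∃ x ∈ lcs b 0, ∃ y : L, z = b x y} ≤ _
    apply Submodule.span_le.mpr
    rintro z ⟨u, -, v, rfl⟩
    simp only [SetLike.mem_coe, Submodule.mem_comap]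
    rw [hLeib a u v]
    exact sub_mem (mem_lcs_succ b (mem_lcs_succ b ha u) v)
      (mem_lcs_succ b (mem_lcs_succ b ha v) u)
  exact hle hw

lemma lcs_add_le (n : ℕ) : ∀ m, lcs b (n + m) ≤ lcs b n
  | 0 => le_rfl
  | (m + 1) => (lcs_succ_le b (n + m)).trans (lcs_add_le n m)

lemma lcs_stab {k : ℕ} (h : lcs b (k + 1) = lcs b k) : ∀ m, lcs b (k + m) = lcs b k
  | 0 => rfl
  | (m + 1) => by
    show Submodule.span ℂ {z : L | ∃ x ∈ lcs b (k + m), ∃ y : L, z = b x y} = lcs b k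
    rw [lcs_stab h m]
    exact h

lemma key [FiniteDimensional ℂ L]
    (hLeib : ∀ x y z : L, b x (b y z) = b (b x y) z - b (b x z) y)
    (x : L) (hsup : Submodule.span ℂ {x} ⊔ lcs b 1 = ⊤) (k : ℕ) :
    finrank ℂ (lcs b (k + 1)) + finrank ℂ (lcs b (k + 1)) ≤
      finrank ℂ (lcs b k) + finrank ℂ (lcs b (k + 2)) := by
  set C := lcs b (k + 2) with hC
  set φ : lcs b k →ₗ[ℂ] L ⧸ C := C.mkQ ∘ₗ b.flip x ∘ₗ (lcs b k).subtype with hφ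
  set ψ : lcs b (k + 1) →ₗ[ℂ] L ⧸ C := C.mkQ ∘ₗ (lcs b (k + 1)).subtype with hψ
  -- step 1: rank φ ≤ d0 - d1
  have hker : (lcs b (k + 1)).comap (lcs b k).subtype ≤ LinearMap.ker φ := by
    rintro ⟨a, ha⟩ ha1
    simp only [Submodule.mem_comap] at ha1
    have hax : b a x ∈ C := mem_lcs_succ b ha1 x
    simp only [hφ, LinearMap.mem_ker, LinearMap.coe_comp, Function.comp_apply,
      Submodule.coe_subtype, LinearMap.flip_apply, Submodule.mkQ_apply,
      Submodule.Quotient.mk_eq_zero]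
    exact hax
  have hcomap : finrank ℂ ((lcs b (k + 1)).comap (lcs b k).subtype) =
      finrank ℂ (lcs b (k + 1)) :=
    (Submodule.comapSubtypeEquivOfLe (lcs_succ_le b k)).finrank_eq
  have h1 : finrank ℂ (LinearMap.range φ) + finrank ℂ (lcs b (k + 1)) ≤
      finrank ℂ (lcs b k) := by
    have hrn := LinearMap.finrank_range_add_finrank_ker φ
    have hle := Submodule.finrank_mono hker
    omega
  -- step 3: rank ψ = d1 - d2
  have hkerψ : LinearMap.ker ψ = C.comap (lcs b (k + 1)).subtype := by
    rw [hψ, LinearMap.ker_comp, Submodule.ker_mkQ]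
  have h3 : finrank ℂ (LinearMap.range ψ) + finrank ℂ C = finrank ℂ (lcs b (k + 1)) := by
    have hrn := LinearMap.finrank_range_add_finrank_ker ψ
    rwa [hkerψ, (Submodule.comapSubtypeEquivOfLe (lcs_succ_le b (k + 1))).finrank_eq] at hrn
  -- step 4: range ψ ≤ range φ
  have h4 : LinearMap.range ψ ≤ LinearMap.range φ := by
    rintro z ⟨⟨v, hv⟩, rfl⟩
    have hvle : lcs b (k + 1) ≤ (LinearMap.range φ).comap C.mkQ := by
      show Submodule.span ℂ {z : L | ∃ x ∈ lcs b k, ∃ y : L, z = b x y} ≤ _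
      apply Submodule.span_le.mpr
      rintro z ⟨a, ha, y, rfl⟩
      simp only [SetLike.mem_coe, Submodule.mem_comap]
      obtain ⟨u, hu, w, hw, hy⟩ := Submodule.mem_sup.mp
        (show y ∈ Submodule.span ℂ {x} ⊔ lcs b 1 from hsup ▸ Submodule.mem_top)
      obtain ⟨c, rfl⟩ := Submodule.mem_span_singleton.mp hu
      have hbaw : b a w ∈ C := bracket_lcs1_mem b hLeib ha hw
      have : C.mkQ (b a y) = c • C.mkQ (b a x) := by
        rw [← hy]
        simp only [map_add, map_smul, Submodule.mkQ_apply]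
        rw [(Submodule.Quotient.mk_eq_zero C).mpr hbaw]
        simp
      rw [this]
      exact Submodule.smul_mem _ c ⟨⟨a, ha⟩, rfl⟩
    have := hvle hv
    simpa [ψ] using this
  have h4' : finrank ℂ (LinearMap.range ψ) ≤ finrank ℂ (LinearMap.range φ) :=
    Submodule.finrank_mono h4
  omega

end Aux

/-- For a 4-dimensional nilpotent complex Leibniz algebra, if `dim L¹ = 4`
and `dim L² = 3`, then `dim L³ = 2` and `dim L⁴ = 1`; in particular the
dimension sequences `(4,3,2,0)`, `(4,3,1,0)`, `(4,3,0,0)` are impossible. -/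
theorem stmt_19 {L : Type*} [AddCommGroup L] [Module ℂ L] [FiniteDimensional ℂ L]
    (b : L →ₗ[ℂ] L →ₗ[ℂ] L)
    (hLeib : ∀ x y z : L, b x (b y z) = b (b x y) z - b (b x z) y)
    (hnilp : ∃ s : ℕ, lcs b s = ⊥)
    (hdim : Module.finrank ℂ L = 4)
    (h2 : Module.finrank ℂ (lcs b 1) = 3) :
    Module.finrank ℂ (lcs b 2) = 2 ∧ Module.finrank ℂ (lcs b 3) = 1 := by
  classical
  obtain ⟨s, hs⟩ := hnilp
  -- choose x ∉ L²
  have h1top : lcs b 1 ≠ ⊤ := by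
    intro h
    rw [h, finrank_top] at h2
    omega
  obtain ⟨x, -, hx⟩ := SetLike.exists_of_lt (show lcs b 1 < ⊤ from lt_top_iff_ne_top.mpr h1top)
  have hx0 : x ≠ 0 := fun h => hx (h ▸ (lcs b 1).zero_mem)
  have hinf : Submodule.span ℂ {x} ⊓ lcs b 1 = ⊥ := by
    rw [eq_bot_iff]
    intro v hv
    rw [Submodule.mem_inf] at hv
    obtain ⟨hv1, hv2⟩ := hv
    rw [Submodule.mem_span_singleton] at hv1
    obtain ⟨c, rfl⟩ := hv1
    rcases eq_or_ne c 0 with rfl | hc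
    · simp
    · exfalso
      apply hx
      have := (lcs b 1).smul_mem c⁻¹ hv2
      rwa [inv_smul_smul₀ hc] at this
  have hsup : Submodule.span ℂ {x} ⊔ lcs b 1 = ⊤ := by
    apply Submodule.eq_top_of_finrank_eq
    have hh := Submodule.finrank_sup_add_finrank_inf_eq (Submodule.span ℂ {x}) (lcs b 1)
    rw [hinf, finrank_bot, finrank_span_singleton hx0, h2] at hh
    rw [hdim]
    omega
  -- strict decrease while nonzero
  have hstrict : ∀ k, lcs b k ≠ ⊥ → Module.finrank ℂ (lcs b (k + 1)) < Module.finrank ℂ (lcs b k) := by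
    intro k hk
    apply Submodule.finrank_lt_finrank_of_lt
    rcases lt_or_eq_of_le (lcs_succ_le b k) with h | h
    · exact h
    · exfalso
      apply hk
      rcases le_or_gt s k with hsk | hsk
      · have hle : lcs b k ≤ lcs b s := by
          have := lcs_add_le b s (k - s)
          rwa [Nat.add_sub_cancel' hsk] at this
        rw [hs] at hle
        exact le_bot_iff.mp hle
      · have heq := lcs_stab b h (s - k)
        rw [Nat.add_sub_cancel' hsk.le, hs] at heq
        exact heq.symm
  have h0 : Module.finrank ℂ (lcs b 0) = 4 := by
    rw [show lcs b 0 = ⊤ from rfl, finrank_top, hdim]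
  have hb1 : lcs b 1 ≠ ⊥ := by
    intro h
    rw [h, finrank_bot] at h2
    omega
  have hlt2 := hstrict 1 hb1
  have hk0 : Module.finrank ℂ (lcs b 1) + Module.finrank ℂ (lcs b 1) ≤
      Module.finrank ℂ (lcs b 0) + Module.finrank ℂ (lcs b 2) := key b hLeib x hsup 0
  have hlt2' : Module.finrank ℂ (lcs b 2) < Module.finrank ℂ (lcs b 1) := hlt2
  have hd2 : Module.finrank ℂ (lcs b 2) = 2 := by omega
  have hb2 : lcs b 2 ≠ ⊥ := by
    intro h
    rw [h, finrank_bot] at hd2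
    omega
  have hlt3 := hstrict 2 hb2
  have hk1 : Module.finrank ℂ (lcs b 2) + Module.finrank ℂ (lcs b 2) ≤
      Module.finrank ℂ (lcs b 1) + Module.finrank ℂ (lcs b 3) := key b hLeib x hsup 1
  have hlt3' : Module.finrank ℂ (lcs b 3) < Module.finrank ℂ (lcs b 2) := hlt3
  exact ⟨hd2, by omega⟩
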